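/- Let n_i, n_k ∈ ℝ³ be unit vectors, let θ, t ∈ ℝ, and let R⁰ ∈ SO(3). Then tr(n̂_i · exp(−tθ n̂_i) · R⁰ · exp(tθ n̂_k)) = tr(−(1/2) n̂_i R⁰ n̂_k² − (1/2) n̂_i² R⁰ n̂_k) + tr(−n̂_i² R⁰ − n̂_i² R⁰ n̂_k²) sin(θt) + tr(n̂_i R⁰ + n̂_i R⁰ n̂_k²) cos(θt) + tr((1/2) n̂_i R⁰ n̂_k + (1/2) n̂_i² R⁰ n̂_k²) sin(2θt) + tr(−(1/2) n̂_i R⁰ n̂_k² + (1/2) n̂_i² R⁰ n̂_k) cos(2θt). -/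

import Mathlib

/-!
For a unit vector `n` the hat matrix satisfies `n̂³ = -n̂`, and for any element `A` of a real
Banach algebra with `A³ = -A` Rodrigues' formula `exp (s A) = 1 + sin s A + (1 - cos s) A²` holds:
the right-hand side `g` solves `g' = A g`, `g 0 = 1`, so `exp (-s A) g s` is constant.
Hence `n̂ᵢ exp (-s n̂ᵢ) = cos s n̂ᵢ - sin s n̂ᵢ²`, and after expanding the product and using linearity
of the trace, the claim is an identity between trigonometric polynomials in `θ t`, which follows
from the double-angle formulas and `sin² + cos² = 1`.
-/

open Matrix Real

noncomputable section

/-- `ℝ³` with the Euclidean norm. -/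
abbrev E3 := EuclideanSpace ℝ (Fin 3)

/-- Hat map: the skew-symmetric matrix associated to a vector `x ∈ ℝ³`,
with rows `(0, −x₃, x₂)`, `(x₃, 0, −x₁)`, `(−x₂, x₁, 0)`. -/
def hat (x : E3) : Matrix (Fin 3) (Fin 3) ℝ :=
  !![0, -x 2, x 1; x 2, 0, -x 0; -x 1, x 0, 0]

/-- Standard basis vectors `e_α` of `ℝ³`. -/
def e (α : Fin 3) : E3 := EuclideanSpace.single α 1

attribute [local instance] Matrix.normedAddCommGroup Matrix.normedSpace

/-- `SO(3)`: real 3×3 matrices with `RᵀR = I` and `det R = 1`. -/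
def SO3 : Set (Matrix (Fin 3) (Fin 3) ℝ) := {R | Rᵀ * R = 1 ∧ R.det = 1}

section
variable {𝔸 : Type*} [Ring 𝔸] [Algebra ℝ 𝔸]

theorem mul_rodrigues_of_pow_three_eq_neg {A : 𝔸} (hA : A ^ 3 = -A) (s c : ℝ) :
    A * (1 + s • A + (1 - c) • A ^ 2) = c • A + s • A ^ 2 := by
  rw [mul_add, mul_add, mul_one, mul_smul_comm, mul_smul_comm, ← pow_two, ← pow_succ', hA,
    sub_smul, one_smul, smul_neg]
  abel

end

section
variable {𝔸 : Type*} [NormedRing 𝔸] [NormedAlgebra ℝ 𝔸] [CompleteSpace 𝔸]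

theorem NormedSpace.exp_smul_mul_exp_smul_neg (A : 𝔸) (s : ℝ) :
    NormedSpace.exp (s • A) * NormedSpace.exp (s • -A) = 1 := by
  let : NormedAlgebra ℚ 𝔸 := NormedAlgebra.restrictScalars ℚ ℝ 𝔸
  rw [← NormedSpace.exp_add_of_commute ((Commute.refl A).neg_right.smul_left s |>.smul_right s),
    ← smul_add, add_neg_cancel, smul_zero, NormedSpace.exp_zero]

theorem NormedSpace.exp_smul_of_pow_three_eq_neg {A : 𝔸} (hA : A ^ 3 = -A) (s : ℝ) :
    NormedSpace.exp (s • A) = 1 + sin s • A + (1 - cos s) • A ^ 2 := by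
  set g : ℝ → 𝔸 := fun u ↦ 1 + sin u • A + (1 - cos u) • A ^ 2
  have hg : ∀ u, HasDerivAt g (A * g u) u := by
    intro u
    rw [mul_rodrigues_of_pow_three_eq_neg hA]
    refine ((((hasDerivAt_sin u).smul_const A).const_add 1).fun_add
      (((hasDerivAt_cos u).const_sub 1).smul_const (A ^ 2))).congr_deriv ?_
    simp
  have hconst : ∀ u, HasDerivAt (fun u ↦ NormedSpace.exp (u • -A) * g u) 0 u := by
    intro u
    refine ((hasDerivAt_exp_smul_const (-A) u).fun_mul (hg u)).congr_deriv ?_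
    noncomm_ring
  have hstart : NormedSpace.exp (s • -A) * g s = 1 := by
    rw [is_const_of_deriv_eq_zero (fun u ↦ (hconst u).differentiableAt)
      (fun u ↦ (hconst u).deriv) s 0]
    simp [g]
  calc NormedSpace.exp (s • A)
      = NormedSpace.exp (s • A) * (NormedSpace.exp (s • -A) * g s) := by rw [hstart, mul_one]
    _ = g s := by rw [← mul_assoc, NormedSpace.exp_smul_mul_exp_smul_neg, one_mul]

end

theorem Matrix.exp_smul_of_pow_three_eq_neg {n : Type*} [Fintype n] [DecidableEq n]
    {A : Matrix n n ℝ} (hA : A ^ 3 = -A) (s : ℝ) :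
    NormedSpace.exp (s • A) = 1 + sin s • A + (1 - cos s) • A ^ 2 :=
  -- `exp` only depends on the topology, so any submultiplicative norm on matrices will do.
  @NormedSpace.exp_smul_of_pow_three_eq_neg _ Matrix.linftyOpNormedRing
    Matrix.linftyOpNormedAlgebra (by infer_instance) A hA s

theorem hat_smul (c : ℝ) (x : E3) : hat (c • x) = c • hat x := by
  ext i j; fin_cases i <;> fin_cases j <;> simp [hat]

theorem hat_pow_three (x : E3) : hat x ^ 3 = -(‖x‖ ^ 2) • hat x := by
  rw [EuclideanSpace.real_norm_sq_eq, Fin.sum_univ_three, pow_three]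
  ext i j; fin_cases i <;> fin_cases j <;> simp [hat, Matrix.mul_apply, Fin.sum_univ_three] <;> ring

theorem hat_pow_three_of_norm_eq_one {x : E3} (hx : ‖x‖ = 1) : hat x ^ 3 = -hat x := by
  rw [hat_pow_three, hx, one_pow, neg_smul, one_smul]

theorem stmt13_general (ni nk : E3) (hni : ‖ni‖ = 1) (hnk : ‖nk‖ = 1) (θ t : ℝ)
    (R0 : Matrix (Fin 3) (Fin 3) ℝ) :
    (hat ni * NormedSpace.exp (hat ((-(t * θ)) • ni)) * R0 *
        NormedSpace.exp (hat ((t * θ) • nk))).trace =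
      ((-(1/2 : ℝ)) • (hat ni * R0 * hat nk ^ 2)
          + (-(1/2 : ℝ)) • (hat ni ^ 2 * R0 * hat nk)).trace
      + (-(hat ni ^ 2 * R0) - hat ni ^ 2 * R0 * hat nk ^ 2).trace * Real.sin (θ * t)
      + (hat ni * R0 + hat ni * R0 * hat nk ^ 2).trace * Real.cos (θ * t)
      + ((1/2 : ℝ) • (hat ni * R0 * hat nk)
          + (1/2 : ℝ) • (hat ni ^ 2 * R0 * hat nk ^ 2)).trace * Real.sin (2 * θ * t)
      + ((-(1/2 : ℝ)) • (hat ni * R0 * hat nk ^ 2)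
          + (1/2 : ℝ) • (hat ni ^ 2 * R0 * hat nk)).trace * Real.cos (2 * θ * t) := by
  have hA := hat_pow_three_of_norm_eq_one hni
  rw [hat_smul, hat_smul, exp_smul_of_pow_three_eq_neg hA,
    exp_smul_of_pow_three_eq_neg (hat_pow_three_of_norm_eq_one hnk),
    mul_rodrigues_of_pow_three_eq_neg hA, sin_neg, cos_neg, mul_comm t θ, mul_assoc 2 θ t,
    sin_two_mul, cos_two_mul]
  simp only [add_mul, mul_add, sub_mul, mul_sub, smul_mul_assoc, mul_smul_comm, neg_mul, mul_neg,
    mul_one, mul_assoc, trace_add, trace_sub, trace_neg, trace_smul, smul_eq_mul]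
  linear_combination (-(hat ni ^ 2 * (R0 * hat nk)).trace) * sin_sq_add_cos_sq (θ * t)

/-- expansion of `tr(n̂ᵢ exp(−tθ n̂ᵢ) R⁰ exp(tθ n̂ₖ))` as a trigonometric
polynomial in `θt`. -/
theorem stmt13 (ni nk : E3) (hni : ‖ni‖ = 1) (hnk : ‖nk‖ = 1) (θ t : ℝ)
    (R0 : Matrix (Fin 3) (Fin 3) ℝ) (hR0 : R0 ∈ SO3) :
    (hat ni * NormedSpace.exp (hat ((-(t * θ)) • ni)) * R0 *
        NormedSpace.exp (hat ((t * θ) • nk))).trace =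
      ((-(1/2 : ℝ)) • (hat ni * R0 * hat nk ^ 2)
          + (-(1/2 : ℝ)) • (hat ni ^ 2 * R0 * hat nk)).trace
      + (-(hat ni ^ 2 * R0) - hat ni ^ 2 * R0 * hat nk ^ 2).trace * Real.sin (θ * t)
      + (hat ni * R0 + hat ni * R0 * hat nk ^ 2).trace * Real.cos (θ * t)
      + ((1/2 : ℝ) • (hat ni * R0 * hat nk)
          + (1/2 : ℝ) • (hat ni ^ 2 * R0 * hat nk ^ 2)).trace * Real.sin (2 * θ * t)
      + ((-(1/2 : ℝ)) • (hat ni * R0 * hat nk ^ 2)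
          + (1/2 : ℝ) • (hat ni ^ 2 * R0 * hat nk)).trace * Real.cos (2 * θ * t) :=
  stmt13_general ni nk hni hnk θ t R0
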